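/- Let T be an operator system and suppose S_k →^i S, i.e. S is an operator system which is the union of an increasing sequence {S_k : k ∈ ℕ} of operator subsystems with inclusion maps i_k. Then S ⊗_er T is the inductive limit of the inductive sequence {S_k ⊗_er T, i_k ⊗ id_T : k ∈ ℕ}. -/

import Mathlib

open scoped ComplexOrder TensorProduct

noncomputable section

/-- Conjugation `a A a*` of a matrix `A` over a complex `*`-vector space by a complex
scalar matrix `a`. -/
def matCong {V : Type} [AddCommGroup V] [Module ℂ V] {ι κ : Type} [Fintype κ]
    (a : Matrix ι κ ℂ) (A : Matrix κ κ V) : Matrix ι ι V :=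
  Matrix.of fun i j => ∑ s : κ, ∑ t : κ, (a i s * star (a j t)) • A s t

/-- The `n × n` matrix with a given element `e` on the diagonal and `0` elsewhere. -/
def unitMat {V : Type} [AddCommGroup V] (e : V) (n : ℕ) : Matrix (Fin n) (Fin n) V :=
  Matrix.of fun i j => if i = j then e else 0

/-- The `1 × 1` matrix with entry `x`. -/
def oneMat {V : Type} (x : V) : Matrix (Fin 1) (Fin 1) V :=
  Matrix.of fun _ _ => x

/-- A matrix ordered `*`-vector space with a distinguished matrix order unit:
`pos n` is the cone in `Mₙ(V)` and `one` is the order unit.  The axioms making such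
data an (abstract) operator system are collected in `PreOS.IsOpSys`. -/
structure PreOS : Type 1 where
  V : Type
  [grp : AddCommGroup V]
  [mod : Module ℂ V]
  [sam : StarAddMonoid V]
  [smod : StarModule ℂ V]
  pos : ∀ n : ℕ, Set (Matrix (Fin n) (Fin n) V)
  one : V

attribute [instance] PreOS.grp PreOS.mod PreOS.sam PreOS.smod

/-- The axioms of an operator system: a matrix ordered `*`-vector space with a proper
matrix ordering and an Archimedean matrix order unit. -/
structure PreOS.IsOpSys (P : PreOS) : Prop where
  star_mem : ∀ n, ∀ A ∈ P.pos n, star A = A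
  add_mem : ∀ n, ∀ A ∈ P.pos n, ∀ B ∈ P.pos n, A + B ∈ P.pos n
  smul_mem : ∀ n, ∀ A ∈ P.pos n, ∀ r : ℝ, 0 ≤ r → (r : ℂ) • A ∈ P.pos n
  cong_mem : ∀ (m n : ℕ) (a : Matrix (Fin m) (Fin n) ℂ), ∀ A ∈ P.pos n,
    matCong a A ∈ P.pos m
  proper : ∀ n, ∀ A ∈ P.pos n, -A ∈ P.pos n → A = 0
  star_one : star P.one = P.one
  one_mem : ∀ n, unitMat P.one n ∈ P.pos n
  orderUnit : ∀ n (A : Matrix (Fin n) (Fin n) P.V), star A = A →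
    ∃ r : ℝ, 0 < r ∧ (r : ℂ) • unitMat P.one n + A ∈ P.pos n
  arch : ∀ n (A : Matrix (Fin n) (Fin n) P.V), star A = A →
    (∀ ε : ℝ, 0 < ε → (ε : ℂ) • unitMat P.one n + A ∈ P.pos n) → A ∈ P.pos n

/-- A unital self-adjoint (`*`-preserving) linear map between matrix ordered spaces;
this is the underlying data of a unital completely positive map. -/
structure LinSU (P Q : PreOS) where
  toLin : P.V →ₗ[ℂ] Q.V
  map_star : ∀ x, toLin (star x) = star (toLin x)
  map_one : toLin P.one = Q.one

/-- A unital completely positive map between matrix ordered `*`-vector spaces. -/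
structure UCPmap (P Q : PreOS) extends LinSU P Q where
  map_pos : ∀ n, ∀ A ∈ P.pos n, A.map toLin ∈ Q.pos n

/-- The identity unital self-adjoint map. -/
def idLinSU (P : PreOS) : LinSU P P :=
  ⟨LinearMap.id, fun _ => rfl, rfl⟩

/-- A unital complete order monomorphism: injective and completely order reflecting. -/
structure IsCOMono {P Q : PreOS} (f : UCPmap P Q) : Prop where
  inj : Function.Injective f.toLin
  reflect : ∀ n (A : Matrix (Fin n) (Fin n) P.V), A.map f.toLin ∈ Q.pos n → A ∈ P.pos n

/-! ## Operator subsystems -/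

/-- A star-closed subspace containing the order unit: the data of an operator subsystem. -/
structure StarSubmodule (P : PreOS) where
  toSub : Submodule ℂ P.V
  star_mem' : ∀ x ∈ toSub, star x ∈ toSub
  one_mem' : P.one ∈ toSub

/-- The operator subsystem determined by a star-closed subspace containing the unit,
with the induced matrix cones. -/
def SubOS (P : PreOS) (W : StarSubmodule P) : PreOS :=
  letI : StarAddMonoid W.toSub :=
    { star := fun x => ⟨star x.1, W.star_mem' x.1 x.2⟩
      star_involutive := fun x => Subtype.ext (star_star x.1)
      star_add := fun x y => Subtype.ext (star_add x.1 y.1) }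
  letI : StarModule ℂ W.toSub := ⟨fun c x => Subtype.ext (star_smul c x.1)⟩
  { V := W.toSub
    pos := fun n => {A | A.map W.toSub.subtype ∈ P.pos n}
    one := ⟨P.one, W.one_mem'⟩ }

/-- The inclusion of a smaller operator subsystem into a bigger one. -/
def inclSub (P : PreOS) (W1 W2 : StarSubmodule P) (h : W1.toSub ≤ W2.toSub) :
    LinSU (SubOS P W1) (SubOS P W2) where
  toLin := Submodule.inclusion h
  map_star := fun _ => rfl
  map_one := rfl

/-- The inclusion of an operator subsystem into the ambient system. -/
def subVal (P : PreOS) (W : StarSubmodule P) : LinSU (SubOS P W) P where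
  toLin := W.toSub.subtype
  map_star := fun _ => rfl
  map_one := rfl

/-! ## The inductive limit construction -/

variable (S : ℕ → PreOS) (φ : ∀ k, LinSU (S k) (S (k + 1)))

/-- The space `S'` of eventually coherent sequences. -/
def coh : Submodule ℂ (∀ k, (S k).V) where
  carrier := {x | ∃ k0, ∀ k, k0 ≤ k → x (k + 1) = (φ k).toLin (x k)}
  zero_mem' := ⟨0, fun k _ => by simp⟩
  add_mem' := by
    rintro x y ⟨a, ha⟩ ⟨b, hb⟩
    exact ⟨max a b, fun k hk => by
      simp [ha k (le_trans (le_max_left a b) hk), hb k (le_trans (le_max_right a b) hk)]⟩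
  smul_mem' := by
    rintro c x ⟨a, ha⟩
    exact ⟨a, fun k hk => by simp [ha k hk]⟩

instance cohSAM : StarAddMonoid (coh S φ) where
  star x := ⟨star x.1, by
    obtain ⟨k0, h⟩ := x.2
    exact ⟨k0, fun k hk => by
      rw [Pi.star_apply, Pi.star_apply, h k hk, (φ k).map_star]⟩⟩
  star_involutive x := Subtype.ext (star_star x.1)
  star_add x y := Subtype.ext (star_add x.1 y.1)

instance cohSMod : StarModule ℂ (coh S φ) := ⟨fun c x => Subtype.ext (star_smul c x.1)⟩

@[simp] lemma coh_star_coe (x : coh S φ) :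
    ((star x : coh S φ) : ∀ k, (S k).V) = star (x : ∀ k, (S k).V) := rfl

/-- The subspace `K` of eventually zero (coherent) sequences. -/
def evK : Submodule ℂ (coh S φ) where
  carrier := {x | ∃ k0, ∀ k, k0 ≤ k → x.1 k = 0}
  zero_mem' := ⟨0, fun k _ => rfl⟩
  add_mem' := by
    rintro x y ⟨a, ha⟩ ⟨b, hb⟩
    exact ⟨max a b, fun k hk => by
      show x.1 k + y.1 k = 0
      rw [ha k (le_trans (le_max_left a b) hk), hb k (le_trans (le_max_right a b) hk), add_zero]⟩
  smul_mem' := by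
    rintro c x ⟨a, ha⟩
    exact ⟨a, fun k hk => by
      show c • x.1 k = 0
      rw [ha k hk, smul_zero]⟩

/-- The quotient space `S'/K`. -/
abbrev Qspace := coh S φ ⧸ evK S φ

lemma evK_star {x : coh S φ} (hx : x ∈ evK S φ) : star x ∈ evK S φ := by
  obtain ⟨k0, h⟩ := hx
  exact ⟨k0, fun k hk => by
    show (star x.1) k = 0
    rw [Pi.star_apply, h k hk, star_zero]⟩

/-- The star operation on the quotient `S'/K`. -/
def qStar : Qspace S φ → Qspace S φ := fun x =>
  Quotient.liftOn' x (fun a => Submodule.Quotient.mk (star a)) (by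
    intro a b h
    have hab : a - b ∈ evK S φ := by
      rw [← Submodule.Quotient.eq, ← Submodule.Quotient.mk''_eq_mk, ← Submodule.Quotient.mk''_eq_mk]
      exact Quotient.sound' h
    refine (Submodule.Quotient.eq _).2 ?_
    rw [← star_sub]
    exact evK_star S φ hab)

lemma qStar_mk (a : coh S φ) :
    qStar S φ (Submodule.Quotient.mk a) = Submodule.Quotient.mk (star a) := rfl

instance qspaceSAM : StarAddMonoid (Qspace S φ) where
  star := qStar S φ
  star_involutive := fun x => Quotient.inductionOn' x fun a => by
    show qStar S φ (qStar S φ (Submodule.Quotient.mk a)) = Submodule.Quotient.mk a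
    rw [qStar_mk, qStar_mk, star_star]
  star_add := fun x y => Quotient.inductionOn₂' x y fun a b => by
    show qStar S φ (Submodule.Quotient.mk a + Submodule.Quotient.mk b)
      = qStar S φ (Submodule.Quotient.mk a) + qStar S φ (Submodule.Quotient.mk b)
    rw [← Submodule.Quotient.mk_add, qStar_mk, qStar_mk, qStar_mk, star_add,
      Submodule.Quotient.mk_add]

@[simp] lemma qspace_star_mk (a : coh S φ) :
    star (Submodule.Quotient.mk a : Qspace S φ) = Submodule.Quotient.mk (star a) := rfl

instance qspaceSMod : StarModule ℂ (Qspace S φ) where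
  star_smul := fun c x => Quotient.inductionOn' x fun a => by
    rw [Submodule.Quotient.mk''_eq_mk, ← Submodule.Quotient.mk_smul, qspace_star_mk,
      qspace_star_mk, star_smul, Submodule.Quotient.mk_smul]

/-- The connecting maps `φ_{k,l} : S_k → S_l` of an inductive sequence. -/
def towerFun (k l : ℕ) (h : k ≤ l) (x : (S k).V) : (S l).V :=
  Nat.leRecOn h (fun {m} y => (φ m).toLin y) x

/-- The sequence `\hat x` associated to `x ∈ S_k`: it is `0` before position `k`,
`x` at position `k` and `φ_{k,l}(x)` afterwards. -/
def hatSeq (k : ℕ) (x : (S k).V) : ∀ l, (S l).V := fun l =>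
  if h : k ≤ l then towerFun S φ k l h x else 0

lemma hatSeq_mem (k : ℕ) (x : (S k).V) : hatSeq S φ k x ∈ coh S φ := by
  refine ⟨k, fun l hl => ?_⟩
  show hatSeq S φ k x (l + 1) = _
  rw [hatSeq, hatSeq, dif_pos hl, dif_pos (le_trans hl (Nat.le_succ l))]
  exact Nat.leRecOn_succ (C := fun m => (S m).V) (next := fun {m} y => (φ m).toLin y) hl x

/-- The canonical map `φ^{(k)} : S_k → S'/K` into the inductive limit. -/
def limCan (k : ℕ) (x : (S k).V) : Qspace S φ :=
  Submodule.Quotient.mk ⟨hatSeq S φ k x, hatSeq_mem S φ k x⟩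

/-- The set `D_n` of hermitian matrices over `S'` which are eventually coherent and
eventually positive. -/
def preD (n : ℕ) : Set (Matrix (Fin n) (Fin n) (coh S φ)) :=
  {A | star A = A ∧ ∃ k0, ∀ k, k0 ≤ k →
    (∀ i j, (A i j).1 (k + 1) = (φ k).toLin ((A i j).1 k)) ∧
    (Matrix.of fun i j => (A i j).1 k) ∈ (S k).pos n}

/-- The matrix cones `M_n(S'/K)^+ = q_n(D_n)` on the quotient (before
Archimedeanization). -/
def quotPos (n : ℕ) : Set (Matrix (Fin n) (Fin n) (Qspace S φ)) :=
  {U | star U = U ∧ ∃ A ∈ preD S φ n,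
    ∀ i j, (Submodule.Quotient.mk (A i j) : Qspace S φ) = U i j}

/-- The order unit of the inductive limit: the class of the sequence `(1_{S_k})_k`. -/
def limOne : Qspace S φ :=
  Submodule.Quotient.mk ⟨fun k => (S k).one, ⟨0, fun k _ => ((φ k).map_one).symm⟩⟩

/-- The matrix cones of the inductive limit: the Archimedeanization of the cones
`q_n(D_n)` of the quotient `S'/K`. -/
def limPos (n : ℕ) : Set (Matrix (Fin n) (Fin n) (Qspace S φ)) :=
  {U | star U = U ∧ ∀ ε : ℝ, 0 < ε →
    (ε : ℂ) • unitMat (limOne S φ) n + U ∈ quotPos S φ n}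

/-- The inductive limit of an inductive sequence of operator systems: the
Archimedeanization of the quotient `S'/K` with cones `q_n(D_n)` and order
unit `(1_{S_k}) + K`. -/
def indLim : PreOS where
  V := Qspace S φ
  pos := limPos S φ
  one := limOne S φ

/-- `L` (an operator-system datum) "is the inductive limit" of the inductive sequence
`{S_k, φ_k}` along the compatible family `c_k : S_k → L`: the canonical map `Ψ`
from the constructed inductive limit to `L` induced by the `c_k` is a unital complete
order isomorphism. -/
def IsIndLimitOf (L : PreOS) (c : ∀ k, (S k).V → L.V) : Prop :=
  ∃ Ψ : (indLim S φ).V →ₗ[ℂ] L.V,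
    (∀ k x, Ψ (limCan S φ k x) = c k x) ∧
    Function.Bijective Ψ ∧
    Ψ (indLim S φ).one = L.one ∧
    (∀ n (U : Matrix (Fin n) (Fin n) (indLim S φ).V),
      U ∈ (indLim S φ).pos n ↔ U.map Ψ ∈ L.pos n)


attribute [-instance] TensorProduct.instStar TensorProduct.instInvolutiveStar
  TensorProduct.instStarAddMonoid TensorProduct.instStarModule

/-! ## Star structure on algebraic tensor products -/

section TensorStar

variable {V W : Type} [AddCommGroup V] [Module ℂ V] [StarAddMonoid V] [StarModule ℂ V]
  [AddCommGroup W] [Module ℂ W] [StarAddMonoid W] [StarModule ℂ W]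

/-- The bi-additive map `(v, w) ↦ v* ⊗ w*`. -/
def starBil : V →+ W →+ TensorProduct ℂ V W where
  toFun v :=
    { toFun := fun w => star v ⊗ₜ[ℂ] star w
      map_zero' := by
        show star v ⊗ₜ[ℂ] star (0 : W) = 0
        rw [star_zero, TensorProduct.tmul_zero]
      map_add' := fun a b => by
        show star v ⊗ₜ[ℂ] star (a + b) = star v ⊗ₜ[ℂ] star a + star v ⊗ₜ[ℂ] star b
        rw [star_add, TensorProduct.tmul_add] }
  map_zero' := AddMonoidHom.ext fun w => by
    show star (0 : V) ⊗ₜ[ℂ] star w = 0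
    rw [star_zero, TensorProduct.zero_tmul]
  map_add' := fun v₁ v₂ => AddMonoidHom.ext fun w => by
    show star (v₁ + v₂) ⊗ₜ[ℂ] star w = star v₁ ⊗ₜ[ℂ] star w + star v₂ ⊗ₜ[ℂ] star w
    rw [star_add, TensorProduct.add_tmul]

/-- The star operation on `V ⊗ W`, determined by `(v ⊗ w)* = v* ⊗ w*`. -/
def tensorStarHom : TensorProduct ℂ V W →+ TensorProduct ℂ V W :=
  TensorProduct.liftAddHom starBil (fun c v w => by
    show star (c • v) ⊗ₜ[ℂ] star w = star v ⊗ₜ[ℂ] star (c • w)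
    rw [star_smul, star_smul, TensorProduct.smul_tmul])

lemma tensorStarHom_tmul (v : V) (w : W) :
    tensorStarHom (v ⊗ₜ[ℂ] w) = star v ⊗ₜ[ℂ] star w :=
  TensorProduct.liftAddHom_tmul _ _ _ _

lemma tensorStarHom_inv (x : TensorProduct ℂ V W) :
    tensorStarHom (tensorStarHom x) = x := by
  induction x using TensorProduct.induction_on with
  | zero => rw [map_zero, map_zero]
  | tmul v w => rw [tensorStarHom_tmul, tensorStarHom_tmul, star_star, star_star]
  | add a b ha hb => rw [map_add, map_add, ha, hb]

lemma tensorStarHom_smul (c : ℂ) (x : TensorProduct ℂ V W) :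
    tensorStarHom (c • x) = star c • tensorStarHom x := by
  induction x using TensorProduct.induction_on with
  | zero => rw [smul_zero, map_zero, smul_zero]
  | tmul v w =>
    rw [TensorProduct.smul_tmul', tensorStarHom_tmul, tensorStarHom_tmul, star_smul,
      ← TensorProduct.smul_tmul']
  | add a b ha hb => rw [smul_add, map_add, map_add, ha, hb, smul_add]

noncomputable instance tensorSAM : StarAddMonoid (TensorProduct ℂ V W) where
  star := tensorStarHom
  star_involutive := tensorStarHom_inv
  star_add := fun a b => map_add tensorStarHom a b

@[simp] lemma tstar_tmul (v : V) (w : W) :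
    star (v ⊗ₜ[ℂ] w) = star v ⊗ₜ[ℂ] star w :=
  tensorStarHom_tmul v w

noncomputable instance tensorSMod : StarModule ℂ (TensorProduct ℂ V W) where
  star_smul := tensorStarHom_smul

end TensorStar

/-! ## Operator system structures on tensor products -/

/-- The data of an operator system structure (a family of matrix cones) on the
algebraic tensor product of two matrix ordered spaces. -/
def KPCones (P Q : PreOS) :=
  ∀ n : ℕ, Set (Matrix (Fin n) (Fin n) (TensorProduct ℂ P.V Q.V))

/-- The algebraic tensor product of two matrix ordered `*`-vector spaces, equipped
with a given family of matrix cones `τ` and unit `1 ⊗ 1`. -/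
def tensorPre (P Q : PreOS) (τ : KPCones P Q) : PreOS where
  V := TensorProduct ℂ P.V Q.V
  pos := τ
  one := P.one ⊗ₜ[ℂ] Q.one

lemma map_tensor_star {P P' Q Q' : PreOS} (f : LinSU P P') (g : LinSU Q Q')
    (u : TensorProduct ℂ P.V Q.V) :
    TensorProduct.map f.toLin g.toLin (star u)
      = star (TensorProduct.map f.toLin g.toLin u) := by
  induction u using TensorProduct.induction_on with
  | zero => rw [star_zero, map_zero, star_zero]
  | tmul v w =>
    rw [tstar_tmul, TensorProduct.map_tmul, TensorProduct.map_tmul, f.map_star, g.map_star,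
      ← tstar_tmul]
  | add a b ha hb => rw [star_add, map_add, map_add, ha, hb, star_add]

/-- The tensor product `f ⊗ g` of unital self-adjoint maps, as a unital self-adjoint
map between tensor products carrying given operator system structures. -/
def tensorMapLinSU {P P' Q Q' : PreOS} (f : LinSU P P') (g : LinSU Q Q')
    (τ : KPCones P Q) (τ' : KPCones P' Q') :
    LinSU (tensorPre P Q τ) (tensorPre P' Q' τ') where
  toLin := TensorProduct.map f.toLin g.toLin
  map_star := fun u => map_tensor_star f g u
  map_one := by
    show TensorProduct.map f.toLin g.toLin (P.one ⊗ₜ[ℂ] Q.one) = P'.one ⊗ₜ[ℂ] Q'.one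
    rw [TensorProduct.map_tmul, f.map_one, g.map_one]

/-! ### Matrix algebras as operator systems -/

/-- Flattening of a matrix of matrices into a big matrix. -/
def flattenMat {n : ℕ} {ι : Type} (A : Matrix (Fin n) (Fin n) (Matrix ι ι ℂ)) :
    Matrix (Fin n × ι) (Fin n × ι) ℂ :=
  Matrix.of fun p q => A p.1 q.1 p.2 q.2

/-- The matrix algebra `M_d(ℂ)` as an operator system: a matrix of matrices is
positive iff the corresponding big scalar matrix is positive semidefinite. -/
def MatOS (d : ℕ) : PreOS where
  V := Matrix (Fin d) (Fin d) ℂ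
  pos := fun n => {A | (flattenMat A).PosSemidef}
  one := 1

/-- The Kronecker-product bilinear map on complex matrices. -/
def kronLin (k m : ℕ) : Matrix (Fin k) (Fin k) ℂ →ₗ[ℂ] Matrix (Fin m) (Fin m) ℂ →ₗ[ℂ]
    Matrix (Fin k × Fin m) (Fin k × Fin m) ℂ :=
  Matrix.kroneckerMapBilinear (LinearMap.mul ℂ ℂ)

/-- The map `φ ⊗ ψ : S ⊗ T → M_k ⊗ M_m ≅ M_{km}` associated to a pair of maps into
matrix algebras. -/
def pairMap {P Q : PreOS} {k m : ℕ} (f : P.V →ₗ[ℂ] Matrix (Fin k) (Fin k) ℂ)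
    (g : Q.V →ₗ[ℂ] Matrix (Fin m) (Fin m) ℂ) :
    TensorProduct ℂ P.V Q.V →ₗ[ℂ] Matrix (Fin k × Fin m) (Fin k × Fin m) ℂ :=
  (TensorProduct.lift (kronLin k m)).comp (TensorProduct.map f g)

/-! ### The min structure -/

/-- The minimal operator system structure on `S ⊗ T`: a matrix is positive iff all
amplifications `(φ ⊗ ψ)_n` by ucp maps into matrix algebras send it to positive
semidefinite matrices. -/
def minPos (P Q : PreOS) : KPCones P Q := fun n =>
  {u | ∀ (k m : ℕ) (f : UCPmap P (MatOS k)) (g : UCPmap Q (MatOS m)),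
    (flattenMat (u.map (pairMap f.toLin g.toLin))).PosSemidef}

/-- The minimal tensor product of operator systems. -/
def minTen (P Q : PreOS) : PreOS := tensorPre P Q (minPos P Q)

/-! ### The max structure -/

/-- The matrix `P ⊗ Q` over `S ⊗ T` associated to matrices `P` over `S` and `Q` over `T`. -/
def tensMat {P Q : PreOS} {l m : ℕ} (Pm : Matrix (Fin l) (Fin l) P.V)
    (Qm : Matrix (Fin m) (Fin m) Q.V) :
    Matrix (Fin l × Fin m) (Fin l × Fin m) (TensorProduct ℂ P.V Q.V) :=
  Matrix.of fun p q => Pm p.1 q.1 ⊗ₜ[ℂ] Qm p.2 q.2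

/-- The cone `D_n^{max} = {α (P ⊗ Q) α* }`. -/
def Dmax (P Q : PreOS) (n : ℕ) : Set (Matrix (Fin n) (Fin n) (TensorProduct ℂ P.V Q.V)) :=
  {u | ∃ (l m : ℕ) (Pm : Matrix (Fin l) (Fin l) P.V) (Qm : Matrix (Fin m) (Fin m) Q.V)
    (a : Matrix (Fin n) (Fin l × Fin m) ℂ),
    Pm ∈ P.pos l ∧ Qm ∈ Q.pos m ∧ u = matCong a (tensMat Pm Qm)}

/-- The maximal operator system structure on `S ⊗ T`: the Archimedeanization of the
cones `D_n^{max}`. -/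
def maxPos (P Q : PreOS) : KPCones P Q := fun n =>
  {u | star u = u ∧ ∀ ε : ℝ, 0 < ε →
    (ε : ℂ) • unitMat (P.one ⊗ₜ[ℂ] Q.one) n + u ∈ Dmax P Q n}

/-- The maximal tensor product of operator systems. -/
def maxTen (P Q : PreOS) : PreOS := tensorPre P Q (maxPos P Q)

/-! ### The commuting (c) structure -/

/-- A bundled complex Hilbert space. -/
structure HilbertC : Type 1 where
  H : Type
  [nacg : NormedAddCommGroup H]
  [ips : InnerProductSpace ℂ H]
  [cs : CompleteSpace H]

attribute [instance] HilbertC.nacg HilbertC.ips HilbertC.cs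

/-- `B(H)` as an operator system: a matrix of operators is positive iff the induced
operator on `H^n` is positive. -/
def BH (h : HilbertC) : PreOS where
  V := h.H →L[ℂ] h.H
  pos := fun n => {A | ∀ ξ : Fin n → h.H,
    0 ≤ ∑ i, ∑ j, (inner ℂ (ξ i) ((A i j) (ξ j)) : ℂ)}
  one := 1

/-- The map `S ⊗ T → B(H)`, `x ⊗ y ↦ φ(x)ψ(y)`, associated to a pair of maps into a
common `B(H)`. -/
def mulMap {P Q : PreOS} (h : HilbertC) (f : P.V →ₗ[ℂ] (h.H →L[ℂ] h.H))
    (g : Q.V →ₗ[ℂ] (h.H →L[ℂ] h.H)) :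
    TensorProduct ℂ P.V Q.V →ₗ[ℂ] (h.H →L[ℂ] h.H) :=
  TensorProduct.lift (((LinearMap.mul ℂ (h.H →L[ℂ] h.H)).comp f).compl₂ g)

/-- The commuting operator system structure on `S ⊗ T`: positivity is tested against
all pairs of ucp maps into a common `B(H)` with commuting ranges. -/
def cPos (P Q : PreOS) : KPCones P Q := fun n =>
  {u | ∀ (h : HilbertC) (f : UCPmap P (BH h)) (g : UCPmap Q (BH h)),
    (∀ x y, (show h.H →L[ℂ] h.H from f.toLin x) * (show h.H →L[ℂ] h.H from g.toLin y)
      = (show h.H →L[ℂ] h.H from g.toLin y) * (show h.H →L[ℂ] h.H from f.toLin x)) →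
    u.map (mulMap h f.toLin g.toLin) ∈ (BH h).pos n}

/-- The commuting tensor product of operator systems. -/
def cTen (P Q : PreOS) : PreOS := tensorPre P Q (cPos P Q)

/-! ### Injectivity, injective envelopes, and the e/el/er structures -/

/-- An operator system `I` is injective if ucp maps into `I` extend along unital
complete order monomorphisms. -/
def InjectiveOS (I : PreOS) : Prop :=
  ∀ (A B : PreOS), A.IsOpSys → B.IsOpSys → ∀ (j : UCPmap A B), IsCOMono j →
    ∀ f : UCPmap A I, ∃ g : UCPmap B I, ∀ x, g.toLin (j.toLin x) = f.toLin x

/-- `ι : P → I` realizes `I` as an injective envelope of `P`. -/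
structure IsInjEnv (P I : PreOS) (ι : UCPmap P I) : Prop where
  os : I.IsOpSys
  mono : IsCOMono ι
  injective : InjectiveOS I
  rigid : ∀ g : UCPmap I I, (∀ x, g.toLin (ι.toLin x) = ι.toLin x) → ∀ y, g.toLin y = y

/-- `τ` is the `el` operator system structure on `P ⊗ Q`, i.e. the structure induced
by the inclusion `P ⊗ Q ⊆ I(P) ⊗_max Q`. -/
def IsElCones (P Q : PreOS) (τ : KPCones P Q) : Prop :=
  ∃ (I : PreOS) (ι : UCPmap P I), IsInjEnv P I ι ∧
    ∀ n u, u ∈ τ n ↔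
      u.map (TensorProduct.map ι.toLin (LinearMap.id : Q.V →ₗ[ℂ] Q.V)) ∈ maxPos I Q n

/-- `τ` is the `er` operator system structure on `P ⊗ Q`, i.e. the structure induced
by the inclusion `P ⊗ Q ⊆ P ⊗_max I(Q)`. -/
def IsErCones (P Q : PreOS) (τ : KPCones P Q) : Prop :=
  ∃ (I : PreOS) (ι : UCPmap Q I), IsInjEnv Q I ι ∧
    ∀ n u, u ∈ τ n ↔
      u.map (TensorProduct.map (LinearMap.id : P.V →ₗ[ℂ] P.V) ι.toLin) ∈ maxPos P I n

/-- `τ` is the `e` operator system structure on `P ⊗ Q`, i.e. the structure induced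
by the inclusion `P ⊗ Q ⊆ I(P) ⊗_max I(Q)`. -/
def IsECones (P Q : PreOS) (τ : KPCones P Q) : Prop :=
  ∃ (I : PreOS) (ιP : UCPmap P I) (J : PreOS) (ιQ : UCPmap Q J),
    IsInjEnv P I ιP ∧ IsInjEnv Q J ιQ ∧
    ∀ n u, u ∈ τ n ↔
      u.map (TensorProduct.map ιP.toLin ιQ.toLin) ∈ maxPos I J n

/-! ### The six Kavruk–Paulsen structures and nuclearity -/

/-- Labels for the six operator system tensor product structures. -/
inductive KPLabel
  | min | e | el | er | c | max
deriving DecidableEq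

/-- `IsKPCones a P Q τ`: `τ` is the operator system structure on `P ⊗ Q` named by the
label `a`. -/
def IsKPCones : KPLabel → ∀ (P Q : PreOS), KPCones P Q → Prop
  | .min => fun P Q τ => τ = minPos P Q
  | .e => IsECones
  | .el => IsElCones
  | .er => IsErCones
  | .c => fun P Q τ => τ = cPos P Q
  | .max => fun P Q τ => τ = maxPos P Q

/-- The partial order `min ≤ e ≤ el, er ≤ c ≤ max` on the six structures. -/
def KPLabel.le : KPLabel → KPLabel → Prop
  | .min, _ => True
  | _, .max => True
  | .e, .min => False
  | .e, _ => True
  | .el, .el => True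
  | .el, .c => True
  | .el, _ => False
  | .er, .er => True
  | .er, .c => True
  | .er, _ => False
  | .c, .c => True
  | .c, _ => False
  | .max, _ => False

/-- `(a, b)`-nuclearity of an operator system `P`: for every operator system `Q`, the
`a`- and the `b`-structure on `P ⊗ Q` coincide. -/
def IsNuclear (a b : KPLabel) (P : PreOS) : Prop :=
  ∀ (Q : PreOS), Q.IsOpSys → ∀ (τa τb : KPCones P Q),
    IsKPCones a P Q τa → IsKPCones b P Q τb → τa = τb

/-! ## Auxiliary matrix lemmas -/

section MatrixHelpers

variable {V W : Type} [AddCommGroup V] [Module ℂ V] [AddCommGroup W] [Module ℂ W]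

lemma matCong_map {ι κ : Type} [Fintype κ] (a : Matrix ι κ ℂ) (A : Matrix κ κ V)
    (f : V →ₗ[ℂ] W) : (matCong a A).map f = matCong a (A.map f) := by
  ext i j
  simp [matCong, Matrix.map_apply, map_sum, map_smul]

lemma mmap_add (A B : Matrix (Fin n) (Fin n) V) (f : V →ₗ[ℂ] W) :
    (A + B).map f = A.map f + B.map f := by
  ext i j; simp [Matrix.map_apply]

lemma mmap_smul (c : ℂ) (A : Matrix (Fin n) (Fin n) V) (f : V →ₗ[ℂ] W) :
    (c • A).map f = c • (A.map f) := by
  ext i j; simp [Matrix.map_apply]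

lemma unitMat_map (e : V) (n : ℕ) (f : V →ₗ[ℂ] W) :
    (unitMat e n).map f = unitMat (f e) n := by
  ext i j; by_cases h : i = j <;> simp [unitMat, Matrix.map_apply, h]

lemma mmap_inj {n : ℕ} {f : V →ₗ[ℂ] W} (hf : Function.Injective f)
    {A B : Matrix (Fin n) (Fin n) V} (h : A.map f = B.map f) : A = B := by
  ext i j
  exact hf (congrFun (congrFun h i) j)

variable [StarAddMonoid V] [StarModule ℂ V] [StarAddMonoid W] [StarModule ℂ W]

lemma mmap_star {n : ℕ} (A : Matrix (Fin n) (Fin n) V) (f : V →ₗ[ℂ] W)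
    (hf : ∀ x, f (star x) = star (f x)) : (star A).map f = star (A.map f) := by
  ext i j
  simp [Matrix.map_apply, Matrix.star_apply, hf]

end MatrixHelpers
/-! ## Block diagonal matrices and cones -/

section Blocks

variable {V : Type} [AddCommGroup V] [Module ℂ V]

/-- Block diagonal sum of two square matrices. -/
def blkD {l1 l2 : ℕ} (A : Matrix (Fin l1) (Fin l1) V) (B : Matrix (Fin l2) (Fin l2) V) :
    Matrix (Fin (l1 + l2)) (Fin (l1 + l2)) V :=
  Matrix.of fun i j =>
    Fin.addCases (fun s => Fin.addCases (fun t => A s t) (fun _ => 0) j)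
                 (fun s => Fin.addCases (fun _ => 0) (fun t => B s t) j) i

@[simp] lemma blkD_cc {l1 l2 : ℕ} (A : Matrix (Fin l1) (Fin l1) V)
    (B : Matrix (Fin l2) (Fin l2) V) (s t : Fin l1) :
    blkD A B (Fin.castAdd l2 s) (Fin.castAdd l2 t) = A s t := by
  simp [blkD]

@[simp] lemma blkD_cn {l1 l2 : ℕ} (A : Matrix (Fin l1) (Fin l1) V)
    (B : Matrix (Fin l2) (Fin l2) V) (s : Fin l1) (t : Fin l2) :
    blkD A B (Fin.castAdd l2 s) (Fin.natAdd l1 t) = 0 := by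
  simp [blkD]

@[simp] lemma blkD_nc {l1 l2 : ℕ} (A : Matrix (Fin l1) (Fin l1) V)
    (B : Matrix (Fin l2) (Fin l2) V) (s : Fin l2) (t : Fin l1) :
    blkD A B (Fin.natAdd l1 s) (Fin.castAdd l2 t) = 0 := by
  simp [blkD]

@[simp] lemma blkD_nn {l1 l2 : ℕ} (A : Matrix (Fin l1) (Fin l1) V)
    (B : Matrix (Fin l2) (Fin l2) V) (s t : Fin l2) :
    blkD A B (Fin.natAdd l1 s) (Fin.natAdd l1 t) = B s t := by
  simp [blkD]

/-- The indicator matrix of an injection `Fin l → Fin L`. -/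
def indMat {l L : ℕ} (em : Fin l → Fin L) : Matrix (Fin L) (Fin l) ℂ :=
  Matrix.of fun i s => if i = em s then 1 else 0

lemma matCong_indMat_apply {l L : ℕ} {em : Fin l → Fin L} (hem : Function.Injective em)
    (A : Matrix (Fin l) (Fin l) V) (s t : Fin l) :
    matCong (indMat em) A (em s) (em t) = A s t := by
  unfold matCong indMat
  rw [Matrix.of_apply]
  rw [Finset.sum_eq_single s]
  · rw [Finset.sum_eq_single t]
    · simp
    · intro v _ hv
      rw [Matrix.of_apply, Matrix.of_apply, if_neg (fun h => hv (hem h).symm)]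
      simp
    · simp
  · intro u _ hu
    rw [Finset.sum_eq_single t]
    · rw [Matrix.of_apply, if_neg (fun h => hu (hem h).symm)]
      simp
    · intro v _ hv
      rw [Matrix.of_apply, Matrix.of_apply, if_neg (fun h => hv (hem h).symm)]
      simp
    · simp
  · simp

lemma matCong_indMat_apply_zero {l L : ℕ} {em : Fin l → Fin L}
    (A : Matrix (Fin l) (Fin l) V) (i j : Fin L) (hi : ∀ s, i ≠ em s) :
    matCong (indMat em) A i j = 0 := by
  unfold matCong indMat
  rw [Matrix.of_apply]
  apply Finset.sum_eq_zero
  intro u _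
  apply Finset.sum_eq_zero
  intro v _
  rw [Matrix.of_apply, if_neg (hi u)]
  simp


lemma matCong_indMat_apply_zero' {l L : ℕ} {em : Fin l → Fin L}
    (A : Matrix (Fin l) (Fin l) V) (i j : Fin L) (hj : ∀ s, j ≠ em s) :
    matCong (indMat em) A i j = 0 := by
  unfold matCong indMat
  rw [Matrix.of_apply]
  apply Finset.sum_eq_zero
  intro u _
  apply Finset.sum_eq_zero
  intro v _
  rw [Matrix.of_apply, Matrix.of_apply,
    show (if j = em v then (1:ℂ) else 0) = 0 from if_neg (hj v)]
  simp

lemma blkD_eq_add {l1 l2 : ℕ} (A : Matrix (Fin l1) (Fin l1) V)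
    (B : Matrix (Fin l2) (Fin l2) V) :
    blkD A B = matCong (indMat (Fin.castAdd l2)) A + matCong (indMat (Fin.natAdd l1)) B := by
  have hc : Function.Injective (Fin.castAdd (n := l1) l2) := fun x y h => by
    apply Fin.ext; simpa using congrArg Fin.val h
  have hn : Function.Injective (Fin.natAdd (m := l2) l1) := fun x y h => by
    apply Fin.ext; simpa using congrArg Fin.val h
  have hcn : ∀ (s : Fin l1) (t : Fin l2),
      Fin.castAdd l2 s ≠ Fin.natAdd l1 t := by
    intro s t h
    have := congrArg Fin.val h
    simp only [Fin.coe_castAdd, Fin.coe_natAdd] at this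
    omega
  ext i j
  rw [Matrix.add_apply]
  refine Fin.addCases (fun s => ?_) (fun s => ?_) i
  · rw [matCong_indMat_apply_zero B _ _ (fun t h => hcn s t h)]
    refine Fin.addCases (fun t => ?_) (fun t => ?_) j
    · rw [blkD_cc, matCong_indMat_apply hc, add_zero]
    · rw [blkD_cn,
        matCong_indMat_apply_zero' A _ _ (fun v h => hcn v t h.symm), add_zero]
  · rw [matCong_indMat_apply_zero A _ _ (fun t h => hcn t s h.symm), zero_add]
    refine Fin.addCases (fun t => ?_) (fun t => ?_) j
    · rw [blkD_nc]
      exact (matCong_indMat_apply_zero' B _ _ (fun v h => hcn t v h)).symm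
    · rw [blkD_nn, matCong_indMat_apply hn]

end Blocks
/-! ## Lemmas about `Dmax` and `maxPos` -/

section DmaxLemmas

lemma tensMat_map {P Q P' Q' : PreOS} {l m : ℕ} (Pm : Matrix (Fin l) (Fin l) P.V)
    (Qm : Matrix (Fin m) (Fin m) Q.V) (f : P.V →ₗ[ℂ] P'.V) (g : Q.V →ₗ[ℂ] Q'.V) :
    (tensMat Pm Qm).map (TensorProduct.map f g) = tensMat (Pm.map f) (Qm.map g) := by
  ext p q
  simp [tensMat, Matrix.map_apply]

lemma Dmax_map {P Q P' Q' : PreOS} {n : ℕ} (f : P.V →ₗ[ℂ] P'.V) (g : Q.V →ₗ[ℂ] Q'.V)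
    (hf : ∀ l (A : Matrix (Fin l) (Fin l) P.V), A ∈ P.pos l → A.map f ∈ P'.pos l)
    (hg : ∀ m (B : Matrix (Fin m) (Fin m) Q.V), B ∈ Q.pos m → B.map g ∈ Q'.pos m)
    {u : Matrix (Fin n) (Fin n) (TensorProduct ℂ P.V Q.V)} (hu : u ∈ Dmax P Q n) :
    u.map (TensorProduct.map f g) ∈ Dmax P' Q' n := by
  obtain ⟨l, m, Pm, Qm, a, hP, hQ, rfl⟩ := hu
  exact ⟨l, m, Pm.map f, Qm.map g, a, hf _ _ hP, hg _ _ hQ, by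
    rw [matCong_map, tensMat_map]⟩

lemma smul_unit_mem_Dmax {P Q : PreOS} {n : ℕ}
    (hPone : unitMat P.one n ∈ P.pos n) (hQone : unitMat Q.one 1 ∈ Q.pos 1)
    {δ : ℝ} (hδ : 0 ≤ δ) :
    (δ : ℂ) • unitMat (P.one ⊗ₜ[ℂ] Q.one) n ∈ Dmax P Q n := by
  classical
  refine ⟨n, 1, unitMat P.one n, unitMat Q.one 1,
    Matrix.of (fun i st => if st.1 = i then (Real.sqrt δ : ℂ) else 0), hPone, hQone, ?_⟩
  ext i j
  rw [Matrix.smul_apply]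
  unfold matCong tensMat unitMat
  simp only [Matrix.of_apply]
  simp only [Fintype.sum_prod_type, Fin.sum_univ_one, Matrix.of_apply]
  rw [Finset.sum_eq_single i ?h1 ?h2]
  case h1 =>
    intro s _ hs
    rw [Finset.sum_eq_zero]
    intro t _
    rw [if_neg hs, zero_mul, zero_smul]
  case h2 => exact fun h => absurd (Finset.mem_univ i) h
  rw [Finset.sum_eq_single j ?h3 ?h4]
  case h3 =>
    intro t _ ht
    rw [if_neg ht, star_zero, mul_zero, zero_smul]
  case h4 => exact fun h => absurd (Finset.mem_univ j) h
  simp only [if_pos rfl, if_true]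
  by_cases h : i = j
  · subst h
    simp only [if_pos rfl]
    have hc : ((Real.sqrt δ : ℝ) : ℂ) * star ((Real.sqrt δ : ℝ) : ℂ) = (δ : ℂ) := by
      rw [Complex.star_def, Complex.conj_ofReal, ← Complex.ofReal_mul, Real.mul_self_sqrt hδ]
    rw [hc]
    simp
  · rw [if_neg h, if_neg h, TensorProduct.zero_tmul, smul_zero, smul_zero]

lemma Dmax_add {P Q : PreOS} {n : ℕ}
    (hPadd : ∀ l (A B : Matrix (Fin l) (Fin l) P.V),
      A ∈ P.pos l → B ∈ P.pos l → A + B ∈ P.pos l)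
    (hPcong : ∀ (r s : ℕ) (a : Matrix (Fin r) (Fin s) ℂ) (A : Matrix (Fin s) (Fin s) P.V),
      A ∈ P.pos s → matCong a A ∈ P.pos r)
    (hQadd : ∀ l (A B : Matrix (Fin l) (Fin l) Q.V),
      A ∈ Q.pos l → B ∈ Q.pos l → A + B ∈ Q.pos l)
    (hQcong : ∀ (r s : ℕ) (a : Matrix (Fin r) (Fin s) ℂ) (A : Matrix (Fin s) (Fin s) Q.V),
      A ∈ Q.pos s → matCong a A ∈ Q.pos r)
    {u v : Matrix (Fin n) (Fin n) (TensorProduct ℂ P.V Q.V)}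
    (hu : u ∈ Dmax P Q n) (hv : v ∈ Dmax P Q n) : u + v ∈ Dmax P Q n := by
  classical
  obtain ⟨l1, m1, P1, Q1, a, hP1, hQ1, rfl⟩ := hu
  obtain ⟨l2, m2, P2, Q2, b, hP2, hQ2, rfl⟩ := hv
  refine ⟨l1 + l2, m1 + m2, blkD P1 P2, blkD Q1 Q2,
    Matrix.of (fun i st =>
      Fin.addCases (fun s1 => Fin.addCases (fun t1 => a i (s1, t1)) (fun _ => 0) st.2)
        (fun s2 => Fin.addCases (fun _ => 0) (fun t2 => b i (s2, t2)) st.2) st.1),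
    ?_, ?_, ?_⟩
  · rw [blkD_eq_add]
    exact hPadd _ _ _ (hPcong _ _ _ _ hP1) (hPcong _ _ _ _ hP2)
  · rw [blkD_eq_add]
    exact hQadd _ _ _ (hQcong _ _ _ _ hQ1) (hQcong _ _ _ _ hQ2)
  · ext i j
    rw [Matrix.add_apply]
    unfold matCong tensMat
    simp only [Matrix.of_apply]
    simp only [Fintype.sum_prod_type, Matrix.of_apply]
    simp only [Fin.sum_univ_add, Fin.addCases_left, Fin.addCases_right,
      blkD_cc, blkD_cn, blkD_nc, blkD_nn, star_zero, mul_zero, zero_mul, zero_smul,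
      smul_zero, TensorProduct.zero_tmul, TensorProduct.tmul_zero,
      Finset.sum_const_zero, add_zero, zero_add, Finset.sum_add_distrib]

end DmaxLemmas
/-! ## More matrix-map helpers -/

section MoreHelpers

variable {V W X : Type} [AddCommGroup V] [Module ℂ V] [AddCommGroup W] [Module ℂ W]
  [AddCommGroup X] [Module ℂ X]

lemma mmap_id {n : ℕ} (A : Matrix (Fin n) (Fin n) V) :
    A.map (LinearMap.id : V →ₗ[ℂ] V) = A := by
  ext i j; simp [Matrix.map_apply]

lemma mmap_comp {ι κ : Type} (A : Matrix ι κ V) (f : V →ₗ[ℂ] W) (g : W →ₗ[ℂ] X) :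
    (A.map f).map g = A.map (g.comp f) := by
  ext i j; simp [Matrix.map_apply]

end MoreHelpers

section StarHelpers

variable {V : Type} [AddCommGroup V] [Module ℂ V] [StarAddMonoid V] [StarModule ℂ V]

lemma star_unitMat {n : ℕ} {e : V} (he : star e = e) :
    star (unitMat e n) = unitMat e n := by
  ext i j
  rw [Matrix.star_apply]
  by_cases h : i = j
  · subst h; simp [unitMat, he]
  · rw [show unitMat e n j i = 0 from if_neg (fun hh => h hh.symm),
      show unitMat e n i j = 0 from if_neg h, star_zero]

lemma star_smul_real {n : ℕ} (ε : ℝ) (A : Matrix (Fin n) (Fin n) V) :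
    star ((ε : ℂ) • A) = (ε : ℂ) • star A := by
  ext i j
  rw [Matrix.star_apply, Matrix.smul_apply, Matrix.smul_apply, Matrix.star_apply,
    star_smul, Complex.star_def, Complex.conj_ofReal]

end StarHelpers

/-! ## Operator subsystem cone lemmas -/

section SubLemmas

variable {S : PreOS} (Wk : StarSubmodule S)

lemma submap_add {n : ℕ} (A B : Matrix (Fin n) (Fin n) (SubOS S Wk).V) :
    (A + B).map Wk.toSub.subtype = A.map Wk.toSub.subtype + B.map Wk.toSub.subtype := by
  ext i j; rfl

lemma submap_smul {n : ℕ} (c : ℂ) (A : Matrix (Fin n) (Fin n) (SubOS S Wk).V) :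
    (c • A).map Wk.toSub.subtype = c • (A.map Wk.toSub.subtype) := by
  ext i j; rfl

lemma submap_matCong {r s : ℕ} (a : Matrix (Fin r) (Fin s) ℂ)
    (A : Matrix (Fin s) (Fin s) (SubOS S Wk).V) :
    (matCong a A).map Wk.toSub.subtype = matCong a (A.map Wk.toSub.subtype) := by
  ext i j
  show Wk.toSub.subtype _ = _
  rw [matCong, matCong, Matrix.of_apply, Matrix.of_apply]
  erw [map_sum]
  refine Finset.sum_congr rfl (fun u _ => ?_)
  erw [map_sum]
  refine Finset.sum_congr rfl (fun v _ => ?_)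
  erw [map_smul]
  rfl

lemma submap_unitMat (n : ℕ) :
    (unitMat (SubOS S Wk).one n).map Wk.toSub.subtype = unitMat S.one n := by
  ext i j
  by_cases h : i = j
  · subst h
    show Wk.toSub.subtype _ = _
    rw [show unitMat (SubOS S Wk).one n i i = (SubOS S Wk).one from if_pos rfl,
      show unitMat S.one n i i = S.one from if_pos rfl]
    rfl
  · show Wk.toSub.subtype _ = _
    rw [show unitMat (SubOS S Wk).one n i j = 0 from if_neg h,
      show unitMat S.one n i j = 0 from if_neg h]
    rfl

lemma submap_star {n : ℕ} (A : Matrix (Fin n) (Fin n) (SubOS S Wk).V) :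
    (star A).map Wk.toSub.subtype = star (A.map Wk.toSub.subtype) := by
  ext i j
  show Wk.toSub.subtype (star A i j) = _
  rw [Matrix.star_apply, Matrix.star_apply]
  rfl

lemma subOS_add (hS : S.IsOpSys) {n : ℕ} {A B : Matrix (Fin n) (Fin n) (SubOS S Wk).V}
    (hA : A ∈ (SubOS S Wk).pos n) (hB : B ∈ (SubOS S Wk).pos n) :
    A + B ∈ (SubOS S Wk).pos n := by
  show (A + B).map Wk.toSub.subtype ∈ S.pos n
  rw [submap_add]
  exact hS.add_mem _ _ hA _ hB

lemma subOS_cong (hS : S.IsOpSys) {r s : ℕ} (a : Matrix (Fin r) (Fin s) ℂ)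
    {A : Matrix (Fin s) (Fin s) (SubOS S Wk).V} (hA : A ∈ (SubOS S Wk).pos s) :
    matCong a A ∈ (SubOS S Wk).pos r := by
  show (matCong a A).map Wk.toSub.subtype ∈ S.pos r
  rw [submap_matCong]
  exact hS.cong_mem _ _ _ _ hA

lemma subOS_one (hS : S.IsOpSys) (n : ℕ) :
    unitMat (SubOS S Wk).one n ∈ (SubOS S Wk).pos n := by
  show (unitMat (SubOS S Wk).one n).map Wk.toSub.subtype ∈ S.pos n
  rw [submap_unitMat]
  exact hS.one_mem n

lemma subOS_incl {W1 W2 : StarSubmodule S} (h : W1.toSub ≤ W2.toSub) {n : ℕ}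
    {A : Matrix (Fin n) (Fin n) (SubOS S W1).V} (hA : A ∈ (SubOS S W1).pos n) :
    A.map (Submodule.inclusion h) ∈ (SubOS S W2).pos n := by
  show (A.map (Submodule.inclusion h)).map W2.toSub.subtype ∈ S.pos n
  have e : (A.map (Submodule.inclusion h)).map W2.toSub.subtype = A.map W1.toSub.subtype := by
    ext i j; rfl
  rw [e]
  exact hA

end SubLemmas

/-! ## `maxPos` functoriality -/

section MaxPosMap

lemma maxPos_map {P Q P' Q' : PreOS} {n : ℕ} (f : LinSU P P') (g : LinSU Q Q')
    (hf : ∀ l (A : Matrix (Fin l) (Fin l) P.V), A ∈ P.pos l → A.map f.toLin ∈ P'.pos l)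
    (hg : ∀ m (B : Matrix (Fin m) (Fin m) Q.V), B ∈ Q.pos m → B.map g.toLin ∈ Q'.pos m)
    {u : Matrix (Fin n) (Fin n) (TensorProduct ℂ P.V Q.V)} (hu : u ∈ maxPos P Q n) :
    u.map (TensorProduct.map f.toLin g.toLin) ∈ maxPos P' Q' n := by
  constructor
  · rw [← mmap_star _ _ (map_tensor_star f g), hu.1]
  · intro ε hε
    have h2 := Dmax_map f.toLin g.toLin hf hg (hu.2 ε hε)
    rw [mmap_add, mmap_smul, unitMat_map, TensorProduct.map_tmul, f.map_one, g.map_one] at h2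
    exact h2

end MaxPosMap
/-! ## The canonical map out of an inductive limit along a compatible cocone -/

section Cocone

variable (S : ℕ → PreOS) (φ : ∀ k, LinSU (S k) (S (k + 1)))
variable {L : PreOS} (j : ∀ k, (S k).V →ₗ[ℂ] L.V)

lemma j_tower (hcomp : ∀ k x, j (k + 1) ((φ k).toLin x) = j k x)
    (k l : ℕ) (h : k ≤ l) (x : (S k).V) :
    j l (towerFun S φ k l h x) = j k x := by
  induction l, h using Nat.le_induction with
  | base => rw [towerFun, Nat.leRecOn_self]
  | succ l hl ih =>
      rw [towerFun, Nat.leRecOn_succ hl, hcomp]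
      exact ih

lemma j_eventually_const (hcomp : ∀ k x, j (k + 1) ((φ k).toLin x) = j k x)
    (x : ∀ k, (S k).V) (N : ℕ)
    (hx : ∀ k, N ≤ k → x (k + 1) = (φ k).toLin (x k)) :
    ∀ k, N ≤ k → j k (x k) = j N (x N) := by
  intro k hk
  induction k, hk using Nat.le_induction with
  | base => rfl
  | succ l hl ih => rw [hx l hl, hcomp]; exact ih

/-- The eventual value of a coherent sequence under a compatible cocone. -/
def limVal (x : coh S φ) : L.V :=
  j x.2.choose (x.1 x.2.choose)

lemma limVal_eq (hcomp : ∀ k x, j (k + 1) ((φ k).toLin x) = j k x)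
    (x : coh S φ) {N : ℕ} (hx : ∀ k, N ≤ k → x.1 (k + 1) = (φ k).toLin (x.1 k)) :
    ∀ k, N ≤ k → limVal S φ j x = j k (x.1 k) := by
  intro k hk
  set k0 := x.2.choose with hk0def
  have hk0 := x.2.choose_spec
  set M := max k0 k with hM
  have h1 : j M (x.1 M) = j k0 (x.1 k0) :=
    j_eventually_const S φ j hcomp x.1 k0 hk0 M (le_max_left _ _)
  have h2 : j M (x.1 M) = j k (x.1 k) :=
    j_eventually_const S φ j hcomp x.1 k (fun m hm => hx m (le_trans hk hm)) M (le_max_right _ _)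
  rw [limVal, ← hk0def, ← h1, h2]

lemma limVal_add (hcomp : ∀ k x, j (k + 1) ((φ k).toLin x) = j k x) (x y : coh S φ) :
    limVal S φ j (x + y) = limVal S φ j x + limVal S φ j y := by
  obtain ⟨a, ha⟩ := x.2
  obtain ⟨b, hb⟩ := y.2
  set N := max a b with hN
  have hx : ∀ k, N ≤ k → x.1 (k + 1) = (φ k).toLin (x.1 k) :=
    fun k hk => ha k (le_trans (le_max_left a b) hk)
  have hy : ∀ k, N ≤ k → y.1 (k + 1) = (φ k).toLin (y.1 k) :=
    fun k hk => hb k (le_trans (le_max_right a b) hk)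
  have hxy : ∀ k, N ≤ k → (x + y).1 (k + 1) = (φ k).toLin ((x + y).1 k) := by
    intro k hk
    show x.1 (k + 1) + y.1 (k + 1) = _
    rw [hx k hk, hy k hk]
    exact (map_add ((φ k).toLin) _ _).symm
  rw [limVal_eq S φ j hcomp (x + y) hxy N (le_refl N),
    limVal_eq S φ j hcomp x hx N (le_refl N),
    limVal_eq S φ j hcomp y hy N (le_refl N)]
  show j N (x.1 N + y.1 N) = _
  rw [map_add]

lemma limVal_smul (hcomp : ∀ k x, j (k + 1) ((φ k).toLin x) = j k x) (c : ℂ) (x : coh S φ) :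
    limVal S φ j (c • x) = c • limVal S φ j x := by
  obtain ⟨a, ha⟩ := x.2
  have hcx : ∀ k, a ≤ k → (c • x).1 (k + 1) = (φ k).toLin ((c • x).1 k) := by
    intro k hk
    show c • x.1 (k + 1) = _
    rw [ha k hk]
    exact (map_smul ((φ k).toLin) c _).symm
  rw [limVal_eq S φ j hcomp (c • x) hcx a (le_refl a),
    limVal_eq S φ j hcomp x ha a (le_refl a)]
  show j a (c • x.1 a) = _
  rw [map_smul]

/-- The linear map on coherent sequences given by the eventual value. -/
def PsiAux (hcomp : ∀ k x, j (k + 1) ((φ k).toLin x) = j k x) : coh S φ →ₗ[ℂ] L.V where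
  toFun := limVal S φ j
  map_add' := limVal_add S φ j hcomp
  map_smul' := limVal_smul S φ j hcomp

lemma PsiAux_ker (hcomp : ∀ k x, j (k + 1) ((φ k).toLin x) = j k x) :
    evK S φ ≤ LinearMap.ker (PsiAux S φ j hcomp) := by
  rintro x ⟨N, hN⟩
  obtain ⟨a, ha⟩ := x.2
  rw [LinearMap.mem_ker]
  show limVal S φ j x = 0
  rw [limVal_eq S φ j hcomp x ha (max a N) (le_max_left a N),
    hN (max a N) (le_max_right a N), map_zero]

/-- The canonical linear map from the inductive limit induced by a compatible cocone. -/
def PsiMap (hcomp : ∀ k x, j (k + 1) ((φ k).toLin x) = j k x) :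
    (indLim S φ).V →ₗ[ℂ] L.V :=
  Submodule.liftQ (evK S φ) (PsiAux S φ j hcomp) (PsiAux_ker S φ j hcomp)

lemma PsiMap_mk (hcomp : ∀ k x, j (k + 1) ((φ k).toLin x) = j k x) (x : coh S φ) :
    PsiMap S φ j hcomp (Submodule.Quotient.mk x) = limVal S φ j x := rfl

lemma PsiMap_eval (hcomp : ∀ k x, j (k + 1) ((φ k).toLin x) = j k x) (x : coh S φ)
    {N : ℕ} (hx : ∀ k, N ≤ k → x.1 (k + 1) = (φ k).toLin (x.1 k)) (k : ℕ) (hk : N ≤ k) :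
    PsiMap S φ j hcomp (Submodule.Quotient.mk x) = j k (x.1 k) := by
  rw [PsiMap_mk]
  exact limVal_eq S φ j hcomp x hx k hk

lemma hatSeq_coh (k : ℕ) (x : (S k).V) :
    ∀ l, k ≤ l → hatSeq S φ k x (l + 1) = (φ l).toLin (hatSeq S φ k x l) := by
  intro l hl
  rw [hatSeq, hatSeq, dif_pos hl, dif_pos (le_trans hl (Nat.le_succ l))]
  exact Nat.leRecOn_succ (C := fun m => (S m).V) (next := fun {m} y => (φ m).toLin y) hl x

lemma PsiMap_limCan (hcomp : ∀ k x, j (k + 1) ((φ k).toLin x) = j k x) (k : ℕ) (x : (S k).V) :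
    PsiMap S φ j hcomp (limCan S φ k x) = j k x := by
  rw [limCan, PsiMap_eval S φ j hcomp _ (hatSeq_coh S φ k x) k (le_refl k)]
  show j k (hatSeq S φ k x k) = j k x
  rw [hatSeq, dif_pos (le_refl k)]
  rw [towerFun, Nat.leRecOn_self]

lemma PsiMap_inj (hcomp : ∀ k x, j (k + 1) ((φ k).toLin x) = j k x)
    (hinj : ∀ k, Function.Injective (j k)) :
    Function.Injective (PsiMap S φ j hcomp) := by
  rw [← LinearMap.ker_eq_bot, Submodule.eq_bot_iff]
  intro q hq
  rw [LinearMap.mem_ker] at hq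
  induction q using Quotient.inductionOn' with
  | h x =>
    rw [Submodule.Quotient.mk''_eq_mk] at hq ⊢
    show (Submodule.Quotient.mk x : coh S φ ⧸ evK S φ) = 0
    rw [Submodule.Quotient.mk_eq_zero]
    obtain ⟨a, ha⟩ := x.2
    refine ⟨a, fun k hk => ?_⟩
    have h1 : j k (x.1 k) = 0 := by
      rw [← PsiMap_eval S φ j hcomp x ha k hk, hq]
    exact hinj k (by rw [h1, map_zero])

lemma PsiMap_star (hcomp : ∀ k x, j (k + 1) ((φ k).toLin x) = j k x)
    (hstar : ∀ k x, j k (star x) = star (j k x)) (q : Qspace S φ) :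
    PsiMap S φ j hcomp (star q) = star (PsiMap S φ j hcomp q) := by
  induction q using Quotient.inductionOn' with
  | h x =>
    rw [Submodule.Quotient.mk''_eq_mk]
    show PsiMap S φ j hcomp (Submodule.Quotient.mk (star x)) = _
    rw [PsiMap_mk, PsiMap_mk]
    obtain ⟨a, ha⟩ := x.2
    have hsx : ∀ k, a ≤ k → (star x).1 (k + 1) = (φ k).toLin ((star x).1 k) := by
      intro k hk
      show star (x.1 (k + 1)) = _
      rw [ha k hk]
      exact ((φ k).map_star _).symm
    rw [limVal_eq S φ j hcomp (star x) hsx a (le_refl a),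
      limVal_eq S φ j hcomp x ha a (le_refl a)]
    show j a (star (x.1 a)) = _
    rw [hstar]

lemma PsiMap_one (hcomp : ∀ k x, j (k + 1) ((φ k).toLin x) = j k x)
    (hone : ∀ k, j k (S k).one = L.one) :
    PsiMap S φ j hcomp (limOne S φ) = L.one := by
  rw [limOne, PsiMap_mk]
  have hc : ∀ k, (0:ℕ) ≤ k →
      (fun k => (S k).one) (k + 1) = (φ k).toLin ((fun k => (S k).one) k) :=
    fun k _ => ((φ k).map_one).symm
  rw [limVal_eq S φ j hcomp _ hc 0 (le_refl 0)]
  exact hone 0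

end Cocone
/-! ## Setting up the inductive system `S_k ⊗_er T` -/

section Main

variable (S : PreOS) (W : ℕ → StarSubmodule S)
  (T : PreOS) (τ : ∀ k, KPCones (SubOS S (W k)) T)

/-- The inductive sequence `S_k ⊗_er T`. -/
def SS : ℕ → PreOS := fun k => tensorPre (SubOS S (W k)) T (τ k)

variable (hmono : ∀ k, (W k).toSub ≤ (W (k + 1)).toSub)

include hmono in
lemma Wmono {k l : ℕ} (h : k ≤ l) : (W k).toSub ≤ (W l).toSub := by
  induction l, h using Nat.le_induction with
  | base => exact le_refl _
  | succ l hl ih => exact le_trans ih (hmono l)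

/-- The connecting maps `i_k ⊗ id`. -/
def pp : ∀ k, LinSU (SS S W T τ k) (SS S W T τ (k + 1)) := fun k =>
  tensorMapLinSU (inclSub S (W k) (W (k + 1)) (hmono k)) (idLinSU T) (τ k) (τ (k + 1))

variable (τS : KPCones S T)

/-- The cocone maps `val_k ⊗ id : S_k ⊗ T → S ⊗ T`. -/
def jj : ∀ k, (SS S W T τ k).V →ₗ[ℂ] TensorProduct ℂ S.V T.V := fun k =>
  TensorProduct.map (subVal S (W k)).toLin (LinearMap.id : T.V →ₗ[ℂ] T.V)

lemma jj_comp : ∀ k x, jj S W T τ (k + 1) ((pp S W T τ hmono k).toLin x)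
    = jj S W T τ k x := by
  intro k x
  have h : (jj S W T τ (k + 1)).comp ((pp S W T τ hmono k).toLin)
      = jj S W T τ k := by
    show (TensorProduct.map _ _).comp (TensorProduct.map _ _) = TensorProduct.map _ _
    rw [← TensorProduct.map_comp]
    congr 1 <;> ext y <;> rfl
  exact LinearMap.congr_fun h x

lemma jj_inj : ∀ k, Function.Injective (jj S W T τ k) := by
  intro k
  have h1 : Function.Injective ((W k).toSub.subtype) := Submodule.injective_subtype _
  have := Module.Flat.rTensor_preserves_injective_linearMap (M := T.V) (R := ℂ)
    ((W k).toSub.subtype) h1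
  simp only [LinearMap.rTensor] at this
  exact this

lemma jj_star : ∀ k x, jj S W T τ k (star x) = star (jj S W T τ k x) :=
  fun k x => map_tensor_star (subVal S (W k)) (idLinSU T) x

lemma jj_one : ∀ k, jj S W T τ k (SS S W T τ k).one = S.one ⊗ₜ[ℂ] T.one := by
  intro k
  show TensorProduct.map _ _ ((SubOS S (W k)).one ⊗ₜ[ℂ] T.one) = S.one ⊗ₜ[ℂ] T.one
  rw [TensorProduct.map_tmul]
  rfl

include hmono τS in
lemma jj_range (hunion : ∀ x : S.V, ∃ k, x ∈ (W k).toSub) :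
    ∀ v : TensorProduct ℂ S.V T.V, ∃ k x, jj S W T τ k x = v := by
  intro v
  induction v using TensorProduct.induction_on with
  | zero => exact ⟨0, 0, map_zero _⟩
  | tmul s t =>
      obtain ⟨k, hk⟩ := hunion s
      refine ⟨k, (⟨s, hk⟩ : (W k).toSub) ⊗ₜ[ℂ] t, ?_⟩
      show TensorProduct.map _ _ _ = _
      rfl
  | add u v hu hv =>
      obtain ⟨k, x, hx⟩ := hu
      obtain ⟨l, y, hy⟩ := hv
      refine ⟨max k l,
        towerFun (SS S W T τ) (pp S W T τ hmono) k (max k l) (le_max_left _ _) x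
        + towerFun (SS S W T τ) (pp S W T τ hmono) l (max k l) (le_max_right _ _) y, ?_⟩
      have t1 : jj S W T τ (max k l)
          (towerFun (SS S W T τ) (pp S W T τ hmono) k (max k l) (le_max_left _ _) x)
          = jj S W T τ k x :=
        j_tower (SS S W T τ) (pp S W T τ hmono) (L := tensorPre S T τS) (jj S W T τ)
          (jj_comp S W T τ hmono) k (max k l) (le_max_left _ _) x
      have t2 : jj S W T τ (max k l)
          (towerFun (SS S W T τ) (pp S W T τ hmono) l (max k l) (le_max_right _ _) y)
          = jj S W T τ l y :=
        j_tower (SS S W T τ) (pp S W T τ hmono) (L := tensorPre S T τS) (jj S W T τ)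
          (jj_comp S W T τ hmono) l (max k l) (le_max_right _ _) y
      rw [map_add, t1, t2, hx, hy]

/-- The canonical map `Ψ` from the inductive limit of the `S_k ⊗_er T` to `S ⊗ T`. -/
def PsiT : Qspace (SS S W T τ) (pp S W T τ hmono) →ₗ[ℂ] TensorProduct ℂ S.V T.V :=
  PsiMap (SS S W T τ) (pp S W T τ hmono) (L := tensorPre S T τS) (jj S W T τ)
    (jj_comp S W T τ hmono)

lemma star_SSone (hS : S.IsOpSys) (hT : T.IsOpSys) (k : ℕ) :
    star (SS S W T τ k).one = (SS S W T τ k).one := by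
  show star ((SubOS S (W k)).one ⊗ₜ[ℂ] T.one) = (SubOS S (W k)).one ⊗ₜ[ℂ] T.one
  rw [tstar_tmul, hT.star_one]
  congr 1
  exact Subtype.ext hS.star_one

lemma limOne_star (hS : S.IsOpSys) (hT : T.IsOpSys) :
    star (limOne (SS S W T τ) (pp S W T τ hmono)) = limOne (SS S W T τ) (pp S W T τ hmono) := by
  rw [limOne, qspace_star_mk]
  congr 1
  apply Subtype.ext
  funext k
  exact star_SSone S W T τ hS hT k

end Main
section Main2

variable (S : PreOS) (W : ℕ → StarSubmodule S)
  (T : PreOS) (τ : ∀ k, KPCones (SubOS S (W k)) T)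
  (hmono : ∀ k, (W k).toSub ≤ (W (k + 1)).toSub)
  (τS : KPCones S T)
  (hS : S.IsOpSys) (hT : T.IsOpSys)
  (I : PreOS) (ι : UCPmap T I) (env : IsInjEnv T I ι)

/-- The embedding `S ⊗ T → S ⊗ I(T)`. -/
def Fmap : TensorProduct ℂ S.V T.V →ₗ[ℂ] TensorProduct ℂ S.V I.V :=
  TensorProduct.map (LinearMap.id : S.V →ₗ[ℂ] S.V) ι.toLin

/-- The embedding `S_k ⊗ I → S ⊗ I`. -/
def Gmap (k : ℕ) : TensorProduct ℂ (SubOS S (W k)).V I.V →ₗ[ℂ] TensorProduct ℂ S.V I.V :=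
  TensorProduct.map ((W k).toSub.subtype) (LinearMap.id : I.V →ₗ[ℂ] I.V)

lemma Gmap_comp_eq (k : ℕ) :
    (Gmap S W I k).comp
        (TensorProduct.map (LinearMap.id : (SubOS S (W k)).V →ₗ[ℂ] (SubOS S (W k)).V) ι.toLin)
      = (Fmap S T I ι).comp (jj S W T τ k) := by
  apply TensorProduct.ext'
  intro x y
  show (Gmap S W I k) (TensorProduct.map _ _ (x ⊗ₜ[ℂ] y)) = (Fmap S T I ι) ((jj S W T τ k) (x ⊗ₜ[ℂ] y))
  rw [TensorProduct.map_tmul]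
  show TensorProduct.map _ _ _ = (Fmap S T I ι) (TensorProduct.map _ _ (x ⊗ₜ[ℂ] y))
  rfl

lemma middle_eq (k : ℕ) {n : ℕ} (M : Matrix (Fin n) (Fin n) (SS S W T τ k).V) :
    ((M.map (TensorProduct.map (LinearMap.id : (SubOS S (W k)).V →ₗ[ℂ] (SubOS S (W k)).V)
        ι.toLin)).map (Gmap S W I k))
      = (M.map (jj S W T τ k)).map (Fmap S T I ι) := by
  ext i j
  show (Gmap S W I k).comp
      (TensorProduct.map (LinearMap.id : (SubOS S (W k)).V →ₗ[ℂ] (SubOS S (W k)).V) ι.toLin)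
      (M i j)
    = (Fmap S T I ι).comp (jj S W T τ k) (M i j)
  rw [Gmap_comp_eq S W T τ I ι]
  rfl

lemma Fmap_one : Fmap S T I ι (S.one ⊗ₜ[ℂ] T.one) = S.one ⊗ₜ[ℂ] I.one := by
  rw [Fmap, TensorProduct.map_tmul, ι.map_one]
  rfl

lemma Gmap_one (k : ℕ) :
    Gmap S W I k ((SubOS S (W k)).one ⊗ₜ[ℂ] I.one) = S.one ⊗ₜ[ℂ] I.one := by
  rw [Gmap]
  rfl

lemma Fmap_star (u : TensorProduct ℂ S.V T.V) :
    Fmap S T I ι (star u) = star (Fmap S T I ι u) :=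
  map_tensor_star (idLinSU S) ι.toLinSU u

lemma Gmap_star (k : ℕ) (u : TensorProduct ℂ (SubOS S (W k)).V I.V) :
    Gmap S W I k (star u) = star (Gmap S W I k u) :=
  map_tensor_star (subVal S (W k)) (idLinSU I) u

lemma Fmap_inj (hι : Function.Injective ι.toLin) : Function.Injective (Fmap S T I ι) := by
  have := Module.Flat.lTensor_preserves_injective_linearMap (M := S.V) (R := ℂ) ι.toLin hι
  simpa [LinearMap.lTensor, Fmap] using this

lemma Gmap_inj (k : ℕ) : Function.Injective (Gmap S W I k) := by
  have := Module.Flat.rTensor_preserves_injective_linearMap (M := I.V) (R := ℂ)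
    ((W k).toSub.subtype) (Submodule.injective_subtype _)
  simp only [LinearMap.rTensor] at this
  exact this

include hS in
lemma star_unit_SI (n : ℕ) (hI : I.IsOpSys) :
    star (unitMat (S.one ⊗ₜ[ℂ] I.one) n) = unitMat (S.one ⊗ₜ[ℂ] I.one) n := by
  apply star_unitMat
  rw [tstar_tmul, hS.star_one, hI.star_one]

lemma subOS_pos_val (k : ℕ) {l : ℕ} {A : Matrix (Fin l) (Fin l) (SubOS S (W k)).V}
    (hA : A ∈ (SubOS S (W k)).pos l) : A.map ((W k).toSub.subtype) ∈ S.pos l := hA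

lemma id_pos (P : PreOS) {m : ℕ} {B : Matrix (Fin m) (Fin m) P.V} (hB : B ∈ P.pos m) :
    B.map (LinearMap.id : P.V →ₗ[ℂ] P.V) ∈ P.pos m := by
  rwa [mmap_id]

lemma Gmap_matCong (k : ℕ) {ι κ : Type} [Fintype κ] (a : Matrix ι κ ℂ)
    (A : Matrix κ κ (TensorProduct ℂ (SubOS S (W k)).V I.V)) :
    (matCong a A).map (Gmap S W I k) = matCong a (A.map (Gmap S W I k)) :=
  matCong_map a A _

lemma Gmap_tensMat (k : ℕ) {l m : ℕ} (Pm : Matrix (Fin l) (Fin l) (SubOS S (W k)).V)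
    (Qm : Matrix (Fin m) (Fin m) I.V) :
    (tensMat Pm Qm).map (Gmap S W I k)
      = tensMat (P := S) (Q := I) (Pm.map ((W k).toSub.subtype))
          (Qm.map (LinearMap.id : I.V →ₗ[ℂ] I.V)) :=
  tensMat_map Pm Qm _ _

end Main2
section Main3

variable (S : PreOS) (W : ℕ → StarSubmodule S)
  (T : PreOS) (τ : ∀ k, KPCones (SubOS S (W k)) T)
  (hmono : ∀ k, (W k).toSub ≤ (W (k + 1)).toSub)
  (τS : KPCones S T)
  (hS : S.IsOpSys) (hT : T.IsOpSys)
  (I : PreOS) (ι : UCPmap T I) (env : IsInjEnv T I ι)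

include hS hT env in
lemma pos_forward (Ik : ℕ → PreOS) (ιk : ∀ k, UCPmap T (Ik k))
    (hiffk : ∀ k (n : ℕ) u, u ∈ τ k n ↔
      u.map (TensorProduct.map (LinearMap.id : (SubOS S (W k)).V →ₗ[ℂ] (SubOS S (W k)).V)
        (ιk k).toLin) ∈ maxPos (SubOS S (W k)) (Ik k) n)
    (φm : ∀ k, UCPmap (Ik k) I) (hφm : ∀ k x, (φm k).toLin ((ιk k).toLin x) = ι.toLin x)
    (n : ℕ) (U : Matrix (Fin n) (Fin n) (Qspace (SS S W T τ) (pp S W T τ hmono)))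
    (hU : U ∈ limPos (SS S W T τ) (pp S W T τ hmono) n) :
    (U.map (PsiT S W T τ hmono τS)).map (Fmap S T I ι) ∈ maxPos S I n := by
  classical
  set Ψ : Qspace (SS S W T τ) (pp S W T τ hmono) →ₗ[ℂ] TensorProduct ℂ S.V T.V :=
    PsiT S W T τ hmono τS with hΨdef
  have hΨstar : ∀ q : Qspace (SS S W T τ) (pp S W T τ hmono), Ψ (star q) = star (Ψ q) :=
    PsiMap_star (SS S W T τ) (pp S W T τ hmono) (L := tensorPre S T τS) (jj S W T τ)
      (jj_comp S W T τ hmono) (jj_star S W T τ)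
  have hΨone : Ψ (limOne (SS S W T τ) (pp S W T τ hmono)) = S.one ⊗ₜ[ℂ] T.one :=
    PsiMap_one (SS S W T τ) (pp S W T τ hmono) (L := tensorPre S T τS) (jj S W T τ)
      (jj_comp S W T τ hmono) (jj_one S W T τ)
  constructor
  · have h1 : star (U.map Ψ) = U.map Ψ := by
      rw [← mmap_star U Ψ hΨstar, hU.1]
    rw [← mmap_star _ _ (Fmap_star S T I ι), h1]
  · intro δ hδ
    obtain ⟨hqstar, A, ⟨hAstar, k0, hAk⟩, hAeq⟩ := hU.2 (δ/2) (half_pos hδ)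
    set M : Matrix (Fin n) (Fin n) (SS S W T τ k0).V :=
      Matrix.of (fun i j => (A i j).1 k0) with hMdef
    have hM : M ∈ τ k0 n := (hAk k0 le_rfl).2
    have hval : M.map (jj S W T τ k0)
        = ((δ/2 : ℝ) : ℂ) • unitMat (S.one ⊗ₜ[ℂ] T.one) n + U.map Ψ := by
      have e1 : M.map (jj S W T τ k0)
          = (((δ/2 : ℝ) : ℂ) • unitMat (limOne (SS S W T τ) (pp S W T τ hmono)) n + U).map Ψ := by
        ext i j
        rw [Matrix.map_apply, Matrix.map_apply, ← hAeq i j]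
        exact (PsiMap_eval (SS S W T τ) (pp S W T τ hmono) (L := tensorPre S T τS)
          (jj S W T τ) (jj_comp S W T τ hmono) (A i j)
          (fun l hl => (hAk l hl).1 i j) k0 le_rfl).symm
      rw [e1, mmap_add, mmap_smul, unitMat_map, hΨone]
    have h1 : M.map (TensorProduct.map LinearMap.id (ιk k0).toLin)
        ∈ maxPos (SubOS S (W k0)) (Ik k0) n := (hiffk k0 n M).1 hM
    have h2 := maxPos_map (idLinSU (SubOS S (W k0))) (φm k0).toLinSU
      (fun l A hA => id_pos _ hA) (φm k0).map_pos h1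
    have hcomp2 : (TensorProduct.map (idLinSU (SubOS S (W k0))).toLin (φm k0).toLin).comp
        (TensorProduct.map (LinearMap.id : (SubOS S (W k0)).V →ₗ[ℂ] (SubOS S (W k0)).V)
          (ιk k0).toLin)
        = TensorProduct.map LinearMap.id ι.toLin := by
      apply TensorProduct.ext'
      intro x y
      show TensorProduct.map _ _ (TensorProduct.map _ _ (x ⊗ₜ[ℂ] y)) = _
      rw [TensorProduct.map_tmul, TensorProduct.map_tmul, TensorProduct.map_tmul, hφm k0 y]
      rfl
    have h3 : M.map (TensorProduct.map LinearMap.id ι.toLin)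
        ∈ maxPos (SubOS S (W k0)) I n := by
      have e2 : (M.map (TensorProduct.map LinearMap.id (ιk k0).toLin)).map
          (TensorProduct.map (idLinSU (SubOS S (W k0))).toLin (φm k0).toLin)
          = M.map (TensorProduct.map LinearMap.id ι.toLin) := by
        ext i j
        show (TensorProduct.map _ _).comp (TensorProduct.map _ _) (M i j) = _
        rw [hcomp2]
        rfl
      rwa [e2] at h2
    have h4 := h3.2 (δ/2) (half_pos hδ)
    have h5 := Dmax_map (P := SubOS S (W k0)) (Q := I) (P' := S) (Q' := I)
      ((W k0).toSub.subtype) (LinearMap.id : I.V →ₗ[ℂ] I.V)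
      (fun l A hA => hA) (fun m B hB => id_pos _ hB) h4
    have e3 : ((δ : ℝ) : ℂ) • unitMat (S.one ⊗ₜ[ℂ] I.one) n
          + (U.map Ψ).map (Fmap S T I ι)
        = (((δ/2 : ℝ) : ℂ) • unitMat ((SubOS S (W k0)).one ⊗ₜ[ℂ] I.one) n
          + M.map (TensorProduct.map LinearMap.id ι.toLin)).map (Gmap S W I k0) := by
      rw [mmap_add, mmap_smul, unitMat_map, Gmap_one S W I k0,
        middle_eq S W T τ I ι k0, hval, mmap_add, mmap_smul, unitMat_map, Fmap_one S T I ι,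
        ← add_assoc, ← add_smul, ← Complex.ofReal_add, add_halves]
    rw [e3]
    exact h5

end Main3
section Main4

variable (S : PreOS) (W : ℕ → StarSubmodule S)
  (T : PreOS) (τ : ∀ k, KPCones (SubOS S (W k)) T)
  (hmono : ∀ k, (W k).toSub ≤ (W (k + 1)).toSub)
  (τS : KPCones S T)
  (hS : S.IsOpSys) (hT : T.IsOpSys)
  (I : PreOS) (ι : UCPmap T I) (env : IsInjEnv T I ι)

include hS hT env in
lemma pos_backward (hunion : ∀ x : S.V, ∃ k, x ∈ (W k).toSub)
    (Ik : ℕ → PreOS) (ιk : ∀ k, UCPmap T (Ik k))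
    (hiffk : ∀ k (n : ℕ) u, u ∈ τ k n ↔
      u.map (TensorProduct.map (LinearMap.id : (SubOS S (W k)).V →ₗ[ℂ] (SubOS S (W k)).V)
        (ιk k).toLin) ∈ maxPos (SubOS S (W k)) (Ik k) n)
    (ψm : ∀ k, UCPmap I (Ik k)) (hψm : ∀ k x, (ψm k).toLin (ι.toLin x) = (ιk k).toLin x)
    (n : ℕ) (U : Matrix (Fin n) (Fin n) (Qspace (SS S W T τ) (pp S W T τ hmono)))
    (hu : (U.map (PsiT S W T τ hmono τS)).map (Fmap S T I ι) ∈ maxPos S I n) :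
    U ∈ limPos (SS S W T τ) (pp S W T τ hmono) n := by
  classical
  set Ψ : Qspace (SS S W T τ) (pp S W T τ hmono) →ₗ[ℂ] TensorProduct ℂ S.V T.V :=
    PsiT S W T τ hmono τS with hΨdef
  have hΨstar : ∀ q : Qspace (SS S W T τ) (pp S W T τ hmono), Ψ (star q) = star (Ψ q) :=
    PsiMap_star (SS S W T τ) (pp S W T τ hmono) (L := tensorPre S T τS) (jj S W T τ)
      (jj_comp S W T τ hmono) (jj_star S W T τ)
  have hΨone : Ψ (limOne (SS S W T τ) (pp S W T τ hmono)) = S.one ⊗ₜ[ℂ] T.one :=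
    PsiMap_one (SS S W T τ) (pp S W T τ hmono) (L := tensorPre S T τS) (jj S W T τ)
      (jj_comp S W T τ hmono) (jj_one S W T τ)
  have hΨinj : Function.Injective Ψ :=
    PsiMap_inj (SS S W T τ) (pp S W T τ hmono) (L := tensorPre S T τS) (jj S W T τ)
      (jj_comp S W T τ hmono) (jj_inj S W T τ)
  have hFinj : Function.Injective (Fmap S T I ι) := Fmap_inj S T I ι env.mono.inj
  have hUstar : star U = U := by
    have h1 : (star (U.map Ψ)).map (Fmap S T I ι) = (U.map Ψ).map (Fmap S T I ι) := by
      rw [mmap_star _ _ (Fmap_star S T I ι), hu.1]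
    have h2 : star (U.map Ψ) = U.map Ψ := mmap_inj hFinj h1
    have h3 : (star U).map Ψ = U.map Ψ := by rw [mmap_star U Ψ hΨstar, h2]
    exact mmap_inj hΨinj h3
  refine ⟨hUstar, ?_⟩
  intro ε hε
  choose y hy using fun p : Fin n × Fin n =>
    Submodule.Quotient.mk_surjective (evK (SS S W T τ) (pp S W T τ hmono))
      (((ε : ℂ) • unitMat (limOne (SS S W T τ) (pp S W T τ hmono)) n + U) p.1 p.2)
  set E : Matrix (Fin n) (Fin n) (Qspace (SS S W T τ) (pp S W T τ hmono)) :=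
    (ε : ℂ) • unitMat (limOne (SS S W T τ) (pp S W T τ hmono)) n + U with hEdef
  have hEstar : star E = E := by
    rw [hEdef, star_add, star_smul_real, star_unitMat (limOne_star S W T τ hmono hS hT), hUstar]
  have hEval : E.map Ψ = (ε : ℂ) • unitMat (S.one ⊗ₜ[ℂ] T.one) n + U.map Ψ := by
    rw [hEdef, mmap_add, mmap_smul, unitMat_map, hΨone]
  set B : Matrix (Fin n) (Fin n) ↥(coh (SS S W T τ) (pp S W T τ hmono)) :=
    Matrix.of (fun i j => ((1:ℂ)/2) • (y (i, j) + star (y (j, i)))) with hBdef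
  have hmkB : ∀ i j, (Submodule.Quotient.mk (B i j) :
      Qspace (SS S W T τ) (pp S W T τ hmono)) = E i j := by
    intro i j
    have h1 : (Submodule.Quotient.mk (star (y (j, i))) :
        Qspace (SS S W T τ) (pp S W T τ hmono)) = E i j := by
      rw [← qspace_star_mk, hy (j, i)]
      have h2 : (star E) i j = E i j := by rw [hEstar]
      rw [Matrix.star_apply] at h2
      exact h2
    show Submodule.Quotient.mk (((1:ℂ)/2) • (y (i, j) + star (y (j, i)))) = E i j
    rw [Submodule.Quotient.mk_smul, Submodule.Quotient.mk_add, hy (i, j), h1, ← two_smul ℂ,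
      smul_smul, show ((1:ℂ)/2) * 2 = 1 by norm_num, one_smul]
  have hBstar : star B = B := by
    ext i j
    rw [Matrix.star_apply, hBdef, Matrix.of_apply, Matrix.of_apply, star_smul, star_add,
      star_star, show star ((1:ℂ)/2) = ((1:ℂ)/2) by simp, add_comm]
  choose t ht using fun p : Fin n × Fin n => (B p.1 p.2).2
  set K0 : ℕ := Finset.univ.sup t with hK0def
  have hK0 : ∀ (i j : Fin n) (l : ℕ), K0 ≤ l →
      (B i j).1 (l + 1) = (pp S W T τ hmono l).toLin ((B i j).1 l) :=
    fun i j l hl => ht (i, j) l (le_trans (Finset.le_sup (Finset.mem_univ (i, j))) hl)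
  obtain ⟨l, m, P, Q, a, hP, hQ, hEq⟩ := hu.2 (ε/2) (half_pos hε)
  choose s hs using fun p : Fin l × Fin l => hunion (P p.1 p.2)
  set K1 : ℕ := Finset.univ.sup s with hK1def
  have hPW : ∀ p q : Fin l, P p q ∈ (W K1).toSub := fun p q =>
    Wmono S W hmono (Finset.le_sup (Finset.mem_univ (p, q))) (hs (p, q))
  refine ⟨hEstar, B, ⟨hBstar, max K0 K1, fun k hk => ⟨fun i j =>
    hK0 i j k (le_trans (le_max_left _ _) hk), ?_⟩⟩, hmkB⟩
  -- eventual positivity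
  set M : Matrix (Fin n) (Fin n) (SS S W T τ k).V :=
    Matrix.of (fun i j => (B i j).1 k) with hMdef
  show M ∈ (SS S W T τ k).pos n
  have hkK0 : K0 ≤ k := le_trans (le_max_left _ _) hk
  have hkK1 : K1 ≤ k := le_trans (le_max_right _ _) hk
  have hMval : M.map (jj S W T τ k) = E.map Ψ := by
    ext i j
    rw [Matrix.map_apply, Matrix.map_apply, ← hmkB i j]
    exact (PsiMap_eval (SS S W T τ) (pp S W T τ hmono) (L := tensorPre S T τS)
      (jj S W T τ) (jj_comp S W T τ hmono) (B i j)
      (fun l' hl' => hK0 i j l' hl') k hkK0).symm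
  set Pk : Matrix (Fin l) (Fin l) (SubOS S (W k)).V :=
    Matrix.of (fun p q => ⟨P p q, Wmono S W hmono hkK1 (hPW p q)⟩) with hPkdef
  have hPk : Pk ∈ (SubOS S (W k)).pos l := by
    show Pk.map (W k).toSub.subtype ∈ S.pos l
    have e : Pk.map (W k).toSub.subtype = P := by ext p q; rfl
    rw [e]
    exact hP
  have hD : matCong a (tensMat Pk Q) ∈ Dmax (SubOS S (W k)) I n :=
    ⟨l, m, Pk, Q, a, hPk, hQ, rfl⟩
  have hDval : (matCong a (tensMat Pk Q)).map (Gmap S W I k)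
      = ((ε/2 : ℝ) : ℂ) • unitMat (S.one ⊗ₜ[ℂ] I.one) n
        + (U.map Ψ).map (Fmap S T I ι) := by
    rw [Gmap_matCong S W I k a (tensMat Pk Q), Gmap_tensMat S W I k]
    have e1 : Pk.map (W k).toSub.subtype = P := by ext p q; rfl
    have e2 : Q.map (LinearMap.id : I.V →ₗ[ℂ] I.V) = Q := by ext p q; rfl
    rw [e1, e2, ← hEq]
  have hNval : (M.map (TensorProduct.map LinearMap.id ι.toLin)).map (Gmap S W I k)
      = ((ε : ℝ) : ℂ) • unitMat (S.one ⊗ₜ[ℂ] I.one) n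
        + (U.map Ψ).map (Fmap S T I ι) := by
    rw [middle_eq S W T τ I ι k, hMval, hEval, mmap_add, mmap_smul, unitMat_map,
      Fmap_one S T I ι]
  have hN : M.map (TensorProduct.map LinearMap.id ι.toLin)
      = ((ε/2 : ℝ) : ℂ) • unitMat ((SubOS S (W k)).one ⊗ₜ[ℂ] I.one) n
        + matCong a (tensMat Pk Q) := by
    apply mmap_inj (Gmap_inj S W I k)
    rw [hNval, mmap_add, mmap_smul, unitMat_map, Gmap_one S W I k, hDval,
      ← add_assoc, ← add_smul, ← Complex.ofReal_add, add_halves]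
  have hNpos : M.map (TensorProduct.map LinearMap.id ι.toLin)
      ∈ maxPos (SubOS S (W k)) I n := by
    constructor
    · apply mmap_inj (Gmap_inj S W I k)
      rw [mmap_star _ _ (Gmap_star S W I k), hNval, star_add, star_smul_real,
        star_unit_SI S hS I n env.os, hu.1]
    · intro δ hδ
      rw [hN, ← add_assoc, ← add_smul, ← Complex.ofReal_add]
      refine Dmax_add (fun l' A B hA hB => subOS_add (W k) hS hA hB)
        (fun r s' a' A hA => subOS_cong (W k) hS a' hA)
        (fun l' A B hA hB => env.os.add_mem l' A hA B hB)
        (fun r s' a' A hA => env.os.cong_mem r s' a' A hA)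
        (smul_unit_mem_Dmax (subOS_one (W k) hS n) (env.os.one_mem 1) ?_) hD
      positivity
  have hcomp3 : (TensorProduct.map (idLinSU (SubOS S (W k))).toLin (ψm k).toLin).comp
      (TensorProduct.map (LinearMap.id : (SubOS S (W k)).V →ₗ[ℂ] (SubOS S (W k)).V) ι.toLin)
      = TensorProduct.map LinearMap.id (ιk k).toLin := by
    apply TensorProduct.ext'
    intro x y
    show TensorProduct.map _ _ (TensorProduct.map _ _ (x ⊗ₜ[ℂ] y)) = _
    rw [TensorProduct.map_tmul, TensorProduct.map_tmul, TensorProduct.map_tmul, hψm k y]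
    rfl
  have h7 := maxPos_map (idLinSU (SubOS S (W k))) (ψm k).toLinSU
    (fun l' A hA => id_pos _ hA) (ψm k).map_pos hNpos
  have e7 : (M.map (TensorProduct.map LinearMap.id ι.toLin)).map
      (TensorProduct.map (idLinSU (SubOS S (W k))).toLin (ψm k).toLin)
      = M.map (TensorProduct.map LinearMap.id (ιk k).toLin) := by
    ext i j
    show (TensorProduct.map _ _).comp (TensorProduct.map _ _) (M i j) = _
    rw [hcomp3]
    rfl
  rw [e7] at h7
  exact (hiffk k n M).2 h7

end Main4

/-- if `S` is the union of an increasing sequence of operator subsystems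
`S_k`, then `S ⊗_er T` is the inductive limit of `{S_k ⊗_er T, i_k ⊗ id_T}`. -/
theorem statement8 (S : PreOS) (hS : S.IsOpSys) (W : ℕ → StarSubmodule S)
    (hmono : ∀ k, (W k).toSub ≤ (W (k + 1)).toSub)
    (hunion : ∀ x : S.V, ∃ k, x ∈ (W k).toSub)
    (T : PreOS) (hT : T.IsOpSys)
    (τ : ∀ k, KPCones (SubOS S (W k)) T)
    (hτ : ∀ k, IsErCones (SubOS S (W k)) T (τ k))
    (τS : KPCones S T) (hτS : IsErCones S T τS) :
    IsIndLimitOf (fun k => tensorPre (SubOS S (W k)) T (τ k))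
      (fun k => tensorMapLinSU (inclSub S (W k) (W (k + 1)) (hmono k)) (idLinSU T)
        (τ k) (τ (k + 1)))
      (tensorPre S T τS)
      (fun k x => TensorProduct.map (subVal S (W k)).toLin
        (LinearMap.id : T.V →ₗ[ℂ] T.V) x) := by
  classical
  obtain ⟨I, ι, env, hiff⟩ := hτS
  choose Ik ιk envk hiffk using hτ
  have hφc := fun k => env.injective T (Ik k) hT (envk k).os (ιk k) (envk k).mono ι
  choose φm hφm using hφc
  have hψc := fun k => (envk k).injective T I hT env.os ι env.mono (ιk k)
  choose ψm hψm using hψc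
  refine ⟨PsiT S W T τ hmono τS, ?_, ⟨?_, ?_⟩, ?_, ?_⟩
  · exact fun k x => PsiMap_limCan (SS S W T τ) (pp S W T τ hmono)
      (L := tensorPre S T τS) (jj S W T τ) (jj_comp S W T τ hmono) k x
  · exact PsiMap_inj (SS S W T τ) (pp S W T τ hmono) (L := tensorPre S T τS)
      (jj S W T τ) (jj_comp S W T τ hmono) (jj_inj S W T τ)
  · intro v
    obtain ⟨k, x, hx⟩ := jj_range S W T τ hmono τS hunion v
    exact ⟨limCan (SS S W T τ) (pp S W T τ hmono) k x,
      (PsiMap_limCan (SS S W T τ) (pp S W T τ hmono) (L := tensorPre S T τS)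
        (jj S W T τ) (jj_comp S W T τ hmono) k x).trans hx⟩
  · exact PsiMap_one (SS S W T τ) (pp S W T τ hmono) (L := tensorPre S T τS)
      (jj S W T τ) (jj_comp S W T τ hmono) (jj_one S W T τ)
  · intro n U
    constructor
    · intro hU
      exact (hiff n (U.map (PsiT S W T τ hmono τS))).2
        (pos_forward S W T τ hmono τS hS hT I ι env Ik ιk hiffk φm hφm n U hU)
    · intro h
      exact pos_backward S W T τ hmono τS hS hT I ι env hunion Ik ιk hiffk ψm hψm n U
        ((hiff n (U.map (PsiT S W T τ hmono τS))).1 h)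

end
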